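/- Let a = 0.789, b = 1.24, p = 0.421. Then for every ν ∈ [μ*, λ*], q_{a,b,p}(λ*, μ*, ν) < 0.7235·(1 + b·(1 − e^{−p}) + a·e^{−p}). -/
import Mathlib

/-- The multivariate exponential quadratic `q_{a,b,p}(λ, μ, ν)` from the paper. -/
noncomputable def qfun (a b p lam mu nu : ℝ) : ℝ :=
  mu ^ 2 / 2 - nu ^ 2 / 2 + nu + 1 / p + b
    + (1 / p - mu) * (1 / p + b) * Real.exp (p * (mu - 1))
    + ((1 / p + b) * (nu - lam) - a / p) * Real.exp (p * (nu - 1))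
    - (1 / p) * (1 / p + b - a) * Real.exp (p * (nu - lam))

/-- `μ* = 1 + (1/p)·log(1/(1+b·p))`. -/
noncomputable def mustar (b p : ℝ) : ℝ := 1 + (1 / p) * Real.log (1 / (1 + b * p))

/-- `λ* = 1 + (1/p)·log((1+(b−a)·p)/(1+b·p))`. -/
noncomputable def lamstar (a b p : ℝ) : ℝ :=
  1 + (1 / p) * Real.log ((1 + (b - a) * p) / (1 + b * p))

lemma exp_taylor8 {x : ℝ} (hx : |x| ≤ 1) :
    1 + x + x^2/2 + x^3/6 + x^4/24 + x^5/120 + x^6/720 + x^7/5040 - x^8 * (9/322560)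
      ≤ Real.exp x ∧
    Real.exp x ≤ 1 + x + x^2/2 + x^3/6 + x^4/24 + x^5/120 + x^6/720 + x^7/5040
      + x^8 * (9/322560) := by
  have h := Real.exp_bound hx (n := 8) (by norm_num)
  have h8 : |x| ^ 8 = x ^ 8 := by rw [← abs_pow, abs_of_nonneg (by positivity)]
  rw [h8, abs_le] at h
  norm_num [Finset.sum_range_succ, Nat.factorial] at h
  constructor <;> linarith [h.1, h.2]

lemma log_c_lt : Real.log 1.52204 < 0.42005160 := by
  rw [Real.log_lt_iff_lt_exp (by norm_num)]
  have h := (exp_taylor8 (x := (0.42005160:ℝ)) (by rw [abs_of_nonneg] <;> norm_num)).1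
  nlinarith [h]

lemma lt_log_c : (0.42005148:ℝ) < Real.log 1.52204 := by
  rw [Real.lt_log_iff_exp_lt (by norm_num)]
  have h := (exp_taylor8 (x := (0.42005148:ℝ)) (by rw [abs_of_nonneg] <;> norm_num)).2
  nlinarith [h]

lemma log_d_lt : Real.log 1.189871 < 0.17384495 := by
  rw [Real.log_lt_iff_lt_exp (by norm_num)]
  have h := (exp_taylor8 (x := (0.17384495:ℝ)) (by rw [abs_of_nonneg] <;> norm_num)).1
  nlinarith [h]

lemma lt_log_d : (0.17384483:ℝ) < Real.log 1.189871 := by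
  rw [Real.lt_log_iff_exp_lt (by norm_num)]
  have h := (exp_taylor8 (x := (0.17384483:ℝ)) (by rw [abs_of_nonneg] <;> norm_num)).2
  nlinarith [h]

lemma exp_neg_p_lt : Real.exp (-0.421) < 0.65639015 := by
  have h := (exp_taylor8 (x := (-0.421:ℝ)) (by rw [abs_of_nonpos] <;> norm_num)).2
  nlinarith [h]

set_option maxHeartbeats 1600000 in
lemma key_poly (x : ℝ) (hx : (0:ℝ) ≤ x) (hx' : x ≤ (519/1250 : ℝ)) :
    (0:ℝ) < (312746811840816276763425530343585912941/47642380800000000000000000000000000000000) + (-408065885359674916993984130796370409/6062400000000000000000000000000000000) * x + (39671970388045578215183003272317721/201600000000000000000000000000000000) * x^2 + (-540526914634143377278286345321701/4800000000000000000000000000000000) * x^3 + (-222179960607326708805684343420897/11520000000000000000000000000000000) * x^4 + (-31605586288438161640145112408103/14400000000000000000000000000000000) * x^5 + (-727193693624183702804085481433/3200000000000000000000000000000000) * x^6 + (-524299646013140544329493001103/100800000000000000000000000000000000) * x^7 + (-323394227067338760362098909271/115200000000000000000000000000000000) * x^8 + (89195048419688563912391/896000000000000000000000000000) * x^9 :=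 by
  rcases le_or_gt x (1/20) with h0|h0
  · have ha : (0:ℝ) ≤ x := hx
    have hb : x ≤ (1/20) := h0
    linarith [ha, hb, pow_le_pow_left₀ ha hb 2, pow_le_pow_left₀ ha hb 3, pow_le_pow_left₀ ha hb 4, pow_le_pow_left₀ ha hb 5, pow_le_pow_left₀ ha hb 6, pow_le_pow_left₀ ha hb 7, pow_le_pow_left₀ ha hb 8, pow_le_pow_left₀ ha hb 9, pow_nonneg ha 2, pow_nonneg ha 3, pow_nonneg ha 4, pow_nonneg ha 5, pow_nonneg ha 6, pow_nonneg ha 7, pow_nonneg ha 8, pow_nonneg ha 9]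
  rcases le_or_gt x (1/10) with h1|h1
  · have ha : (0:ℝ) ≤ x - (1/20) := by linarith
    have hb : x - (1/20) ≤ (1/20) := by linarith
    linarith [ha, hb, pow_le_pow_left₀ ha hb 2, pow_le_pow_left₀ ha hb 3, pow_le_pow_left₀ ha hb 4, pow_le_pow_left₀ ha hb 5, pow_le_pow_left₀ ha hb 6, pow_le_pow_left₀ ha hb 7, pow_le_pow_left₀ ha hb 8, pow_le_pow_left₀ ha hb 9, pow_nonneg ha 2, pow_nonneg ha 3, pow_nonneg ha 4, pow_nonneg ha 5, pow_nonneg ha 6, pow_nonneg ha 7, pow_nonneg ha 8, pow_nonneg ha 9]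
  rcases le_or_gt x (3/20) with h2|h2
  · have ha : (0:ℝ) ≤ x - (1/10) := by linarith
    have hb : x - (1/10) ≤ (1/20) := by linarith
    linarith [ha, hb, pow_le_pow_left₀ ha hb 2, pow_le_pow_left₀ ha hb 3, pow_le_pow_left₀ ha hb 4, pow_le_pow_left₀ ha hb 5, pow_le_pow_left₀ ha hb 6, pow_le_pow_left₀ ha hb 7, pow_le_pow_left₀ ha hb 8, pow_le_pow_left₀ ha hb 9, pow_nonneg ha 2, pow_nonneg ha 3, pow_nonneg ha 4, pow_nonneg ha 5, pow_nonneg ha 6, pow_nonneg ha 7, pow_nonneg ha 8, pow_nonneg ha 9]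
  rcases le_or_gt x (9/50) with h3|h3
  · have ha : (0:ℝ) ≤ x - (3/20) := by linarith
    have hb : x - (3/20) ≤ (3/100) := by linarith
    linarith [ha, hb, pow_le_pow_left₀ ha hb 2, pow_le_pow_left₀ ha hb 3, pow_le_pow_left₀ ha hb 4, pow_le_pow_left₀ ha hb 5, pow_le_pow_left₀ ha hb 6, pow_le_pow_left₀ ha hb 7, pow_le_pow_left₀ ha hb 8, pow_le_pow_left₀ ha hb 9, pow_nonneg ha 2, pow_nonneg ha 3, pow_nonneg ha 4, pow_nonneg ha 5, pow_nonneg ha 6, pow_nonneg ha 7, pow_nonneg ha 8, pow_nonneg ha 9]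
  rcases le_or_gt x (19/100) with h4|h4
  · have ha : (0:ℝ) ≤ x - (9/50) := by linarith
    have hb : x - (9/50) ≤ (1/100) := by linarith
    linarith [ha, hb, pow_le_pow_left₀ ha hb 2, pow_le_pow_left₀ ha hb 3, pow_le_pow_left₀ ha hb 4, pow_le_pow_left₀ ha hb 5, pow_le_pow_left₀ ha hb 6, pow_le_pow_left₀ ha hb 7, pow_le_pow_left₀ ha hb 8, pow_le_pow_left₀ ha hb 9, pow_nonneg ha 2, pow_nonneg ha 3, pow_nonneg ha 4, pow_nonneg ha 5, pow_nonneg ha 6, pow_nonneg ha 7, pow_nonneg ha 8, pow_nonneg ha 9]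
  rcases le_or_gt x (1/5) with h5|h5
  · have ha : (0:ℝ) ≤ x - (19/100) := by linarith
    have hb : x - (19/100) ≤ (1/100) := by linarith
    linarith [ha, hb, pow_le_pow_left₀ ha hb 2, pow_le_pow_left₀ ha hb 3, pow_le_pow_left₀ ha hb 4, pow_le_pow_left₀ ha hb 5, pow_le_pow_left₀ ha hb 6, pow_le_pow_left₀ ha hb 7, pow_le_pow_left₀ ha hb 8, pow_le_pow_left₀ ha hb 9, pow_nonneg ha 2, pow_nonneg ha 3, pow_nonneg ha 4, pow_nonneg ha 5, pow_nonneg ha 6, pow_nonneg ha 7, pow_nonneg ha 8, pow_nonneg ha 9]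
  rcases le_or_gt x (21/100) with h6|h6
  · have ha : (0:ℝ) ≤ x - (1/5) := by linarith
    have hb : x - (1/5) ≤ (1/100) := by linarith
    linarith [ha, hb, pow_le_pow_left₀ ha hb 2, pow_le_pow_left₀ ha hb 3, pow_le_pow_left₀ ha hb 4, pow_le_pow_left₀ ha hb 5, pow_le_pow_left₀ ha hb 6, pow_le_pow_left₀ ha hb 7, pow_le_pow_left₀ ha hb 8, pow_le_pow_left₀ ha hb 9, pow_nonneg ha 2, pow_nonneg ha 3, pow_nonneg ha 4, pow_nonneg ha 5, pow_nonneg ha 6, pow_nonneg ha 7, pow_nonneg ha 8, pow_nonneg ha 9]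
  rcases le_or_gt x (6/25) with h7|h7
  · have ha : (0:ℝ) ≤ x - (21/100) := by linarith
    have hb : x - (21/100) ≤ (3/100) := by linarith
    linarith [ha, hb, pow_le_pow_left₀ ha hb 2, pow_le_pow_left₀ ha hb 3, pow_le_pow_left₀ ha hb 4, pow_le_pow_left₀ ha hb 5, pow_le_pow_left₀ ha hb 6, pow_le_pow_left₀ ha hb 7, pow_le_pow_left₀ ha hb 8, pow_le_pow_left₀ ha hb 9, pow_nonneg ha 2, pow_nonneg ha 3, pow_nonneg ha 4, pow_nonneg ha 5, pow_nonneg ha 6, pow_nonneg ha 7, pow_nonneg ha 8, pow_nonneg ha 9]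
  rcases le_or_gt x (29/100) with h8|h8
  · have ha : (0:ℝ) ≤ x - (6/25) := by linarith
    have hb : x - (6/25) ≤ (1/20) := by linarith
    linarith [ha, hb, pow_le_pow_left₀ ha hb 2, pow_le_pow_left₀ ha hb 3, pow_le_pow_left₀ ha hb 4, pow_le_pow_left₀ ha hb 5, pow_le_pow_left₀ ha hb 6, pow_le_pow_left₀ ha hb 7, pow_le_pow_left₀ ha hb 8, pow_le_pow_left₀ ha hb 9, pow_nonneg ha 2, pow_nonneg ha 3, pow_nonneg ha 4, pow_nonneg ha 5, pow_nonneg ha 6, pow_nonneg ha 7, pow_nonneg ha 8, pow_nonneg ha 9]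
  rcases le_or_gt x (39/100) with h9|h9
  · have ha : (0:ℝ) ≤ x - (29/100) := by linarith
    have hb : x - (29/100) ≤ (1/10) := by linarith
    linarith [ha, hb, pow_le_pow_left₀ ha hb 2, pow_le_pow_left₀ ha hb 3, pow_le_pow_left₀ ha hb 4, pow_le_pow_left₀ ha hb 5, pow_le_pow_left₀ ha hb 6, pow_le_pow_left₀ ha hb 7, pow_le_pow_left₀ ha hb 8, pow_le_pow_left₀ ha hb 9, pow_nonneg ha 2, pow_nonneg ha 3, pow_nonneg ha 4, pow_nonneg ha 5, pow_nonneg ha 6, pow_nonneg ha 7, pow_nonneg ha 8, pow_nonneg ha 9]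
  rcases le_or_gt x (41/100) with h10|h10
  · have ha : (0:ℝ) ≤ x - (39/100) := by linarith
    have hb : x - (39/100) ≤ (1/50) := by linarith
    linarith [ha, hb, pow_le_pow_left₀ ha hb 2, pow_le_pow_left₀ ha hb 3, pow_le_pow_left₀ ha hb 4, pow_le_pow_left₀ ha hb 5, pow_le_pow_left₀ ha hb 6, pow_le_pow_left₀ ha hb 7, pow_le_pow_left₀ ha hb 8, pow_le_pow_left₀ ha hb 9, pow_nonneg ha 2, pow_nonneg ha 3, pow_nonneg ha 4, pow_nonneg ha 5, pow_nonneg ha 6, pow_nonneg ha 7, pow_nonneg ha 8, pow_nonneg ha 9]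
  rcases le_or_gt x (83/200) with h11|h11
  · have ha : (0:ℝ) ≤ x - (41/100) := by linarith
    have hb : x - (41/100) ≤ (1/200) := by linarith
    linarith [ha, hb, pow_le_pow_left₀ ha hb 2, pow_le_pow_left₀ ha hb 3, pow_le_pow_left₀ ha hb 4, pow_le_pow_left₀ ha hb 5, pow_le_pow_left₀ ha hb 6, pow_le_pow_left₀ ha hb 7, pow_le_pow_left₀ ha hb 8, pow_le_pow_left₀ ha hb 9, pow_nonneg ha 2, pow_nonneg ha 3, pow_nonneg ha 4, pow_nonneg ha 5, pow_nonneg ha 6, pow_nonneg ha 7, pow_nonneg ha 8, pow_nonneg ha 9]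
  · have ha : (0:ℝ) ≤ x - (83/200) := by linarith
    have hb : x - (83/200) ≤ (1/5000) := by linarith
    linarith [ha, hb, pow_le_pow_left₀ ha hb 2, pow_le_pow_left₀ ha hb 3, pow_le_pow_left₀ ha hb 4, pow_le_pow_left₀ ha hb 5, pow_le_pow_left₀ ha hb 6, pow_le_pow_left₀ ha hb 7, pow_le_pow_left₀ ha hb 8, pow_le_pow_left₀ ha hb 9, pow_nonneg ha 2, pow_nonneg ha 3, pow_nonneg ha 4, pow_nonneg ha 5, pow_nonneg ha 6, pow_nonneg ha 7, pow_nonneg ha 8, pow_nonneg ha 9]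


set_option maxHeartbeats 1600000 in
/-- for `a = 0.789`, `b = 1.24`, `p = 0.421`, every `ν ∈ [μ*, λ*]` satisfies
`q_{a,b,p}(λ*, μ*, ν) < 0.7235·(1 + b·(1 − e^{−p}) + a·e^{−p})`. -/
theorem stmt_18 :
    ∀ ν ∈ Set.Icc (mustar 1.24 0.421) (lamstar 0.789 1.24 0.421),
      qfun 0.789 1.24 0.421 (lamstar 0.789 1.24 0.421) (mustar 1.24 0.421) ν
        < 0.7235 * (1 + 1.24 * (1 - Real.exp (-0.421)) + 0.789 * Real.exp (-0.421)) := by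
  intro ν hν
  obtain ⟨hν1, hν2⟩ := hν
  have hc : (0:ℝ) < 1.52204 := by norm_num
  have hd : (0:ℝ) < 1.189871 := by norm_num
  have hL1a := lt_log_c
  have hL1b := log_c_lt
  have hL2a := lt_log_d
  have hL2b := log_d_lt
  have hFe := exp_neg_p_lt
  have hmu : mustar 1.24 0.421 = 1 - Real.log 1.52204 / 0.421 := by
    rw [mustar, show (1:ℝ) + 1.24 * 0.421 = 1.52204 by norm_num, one_div (1.52204:ℝ),
      Real.log_inv]
    ring
  have hlam : lamstar 0.789 1.24 0.421
      = 1 + (Real.log 1.189871 - Real.log 1.52204) / 0.421 := by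
    rw [lamstar, show (1:ℝ) + (1.24 - 0.789) * 0.421 = 1.189871 by norm_num,
      show (1:ℝ) + 1.24 * 0.421 = 1.52204 by norm_num,
      Real.log_div (by norm_num) (by norm_num)]
    ring
  have he1 : Real.exp (0.421 * (mustar 1.24 0.421 - 1)) = 1 / 1.52204 := by
    rw [hmu, show (0.421:ℝ) * (1 - Real.log 1.52204 / 0.421 - 1) = -Real.log 1.52204 by ring,
      Real.exp_neg, Real.exp_log hc, one_div]
  have he2 : Real.exp (0.421 * (ν - lamstar 0.789 1.24 0.421))
      = Real.exp (0.421 * (ν - 1)) * (1.52204 / 1.189871) := by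
    rw [hlam, show (0.421:ℝ) * (ν - (1 + (Real.log 1.189871 - Real.log 1.52204) / 0.421))
        = 0.421 * (ν - 1) + (Real.log 1.52204 - Real.log 1.189871) by ring,
      Real.exp_add, Real.exp_sub, Real.exp_log hc, Real.exp_log hd]
  rw [hmu] at hν1
  rw [hlam] at hν2
  norm_num at hν1 hν2
  have hν0 : (0:ℝ) ≤ ν := by linarith
  have hνu : ν ≤ (519/1250 : ℝ) := by linarith
  have hEpos : (0:ℝ) < Real.exp (0.421 * (ν - 1)) := Real.exp_pos _
  have habs : |0.421 * (ν - 1)| ≤ 1 := abs_le.mpr ⟨by linarith, by linarith⟩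
  have hElow := (exp_taylor8 habs).1
  have hmu0 : (0:ℝ) ≤ 1 - Real.log 1.52204 / 0.421 := by norm_num; linarith
  have hmuU : 1 - Real.log 1.52204 / 0.421 ≤ 1 - 0.42005148 / 0.421 := by norm_num; linarith
  have hsq : (1 - Real.log 1.52204 / 0.421)^2 ≤ ((1:ℝ) - 0.42005148 / 0.421)^2 :=
    pow_le_pow_left₀ hmu0 hmuU 2
  have hCoef : ((1/0.421 + 1.24) * (ν - (1 + (Real.log 1.189871 - Real.log 1.52204) / 0.421))
        - 0.789/0.421) - 1/0.421 * (1/0.421 + 1.24 - 0.789) * (1.52204/1.189871)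
      ≤ (1/0.421 + 1.24) * (ν - (1 + (0.17384483 - 0.42005160)/0.421)) - 0.789/0.421
          - 1/0.421 * (1/0.421 + 1.24 - 0.789) * (1.52204/1.189871) := by
    norm_num
    linarith
  have hNbarneg : (1/0.421 + 1.24) * (ν - (1 + (0.17384483 - 0.42005160)/0.421)) - 0.789/0.421
      - 1/0.421 * (1/0.421 + 1.24 - 0.789) * (1.52204/1.189871) ≤ 0 := by
    norm_num
    linarith
  have hprod1 := mul_le_mul_of_nonneg_right hCoef hEpos.le
  have hprod2 := mul_le_mul_of_nonpos_left hElow hNbarneg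
  have hkey := key_poly ν hν0 hνu
  rw [qfun, he1, he2, hmu, hlam]
  norm_num at hprod1 hprod2 hsq ⊢
  linarith [hprod1, hprod2, hsq, hkey, hFe, hL1b]
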